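/- arXiv:1301.6935 — 6 statements merged into one kernel-verified Lean document; each statement's English description precedes it below -/
import Mathlib

section
/- Let k > 0 and let C : ℝ × ℝ → ℝ be a function such that C(α, β)/(α − β) tends to −1/k as (α, β) tends to (1, 1) within the set {(α, β) | α ≠ β}. Then for every n and every probability vector (p₁, …, pₙ) with all pᵢ > 0, the function (α, β) ↦ Σᵢ (pᵢ^α − pᵢ^β)/C(α, β) tends to −k·Σᵢ pᵢ ln pᵢ as (α, β) tends to (1, 1) within the set {(α, β) | α ≠ β}. -/
/-!
The sum is `(F α - F β) / C(α, β)` with `F x = ∑ pᵢ ^ x`, i.e. the difference quotient of `F`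
divided by `C(α, β) / (α - β) → -1/k`. Since `F` is strictly differentiable at `1` with
`F'(1) = ∑ pᵢ log pᵢ`, its difference quotient converges to `F'(1)` as `(α, β) → (1, 1)` off the
diagonal, and the limit is `F'(1) / (-1/k)`.
-/

open Filter Real Topology

section SlopeOffDiagonal

variable {𝕜 : Type*} [NontriviallyNormedField 𝕜] {f : 𝕜 → 𝕜} {f' x : 𝕜}

theorem HasStrictDerivAt.tendsto_slope_offDiag (hf : HasStrictDerivAt f f' x) :
    Tendsto (fun q : 𝕜 × 𝕜 => (f q.1 - f q.2) / (q.1 - q.2))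
      (𝓝[{q | q.1 ≠ q.2}] (x, x)) (𝓝 f') := by
  have hsmall := (hf.isLittleO.mono
    (nhdsWithin_le_nhds (s := {q : 𝕜 × 𝕜 | q.1 ≠ q.2}))).tendsto_div_nhds_zero
  rw [← tendsto_sub_nhds_zero_iff]
  refine hsmall.congr' ?_
  filter_upwards [self_mem_nhdsWithin] with q hq
  have : q.1 - q.2 ≠ 0 := sub_ne_zero.2 hq
  simp only [ContinuousLinearMap.toSpanSingleton_apply, smul_eq_mul]
  field_simp

theorem HasStrictDerivAt.tendsto_sub_div_of_tendsto_div_sub (hf : HasStrictDerivAt f f' x)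
    {C : 𝕜 × 𝕜 → 𝕜} {c : 𝕜} (hc : c ≠ 0)
    (hC : Tendsto (fun q : 𝕜 × 𝕜 => C q / (q.1 - q.2)) (𝓝[{q | q.1 ≠ q.2}] (x, x)) (𝓝 c)) :
    Tendsto (fun q : 𝕜 × 𝕜 => (f q.1 - f q.2) / C q) (𝓝[{q | q.1 ≠ q.2}] (x, x))
      (𝓝 (f' / c)) := by
  refine (hf.tendsto_slope_offDiag.div hC hc).congr' ?_
  filter_upwards [self_mem_nhdsWithin] with q hq
  exact div_div_div_cancel_right₀ (sub_ne_zero.2 hq) _ _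

end SlopeOffDiagonal

theorem Real.hasStrictDerivAt_sum_const_rpow {ι : Type*} (s : Finset ι) {p : ι → ℝ}
    (hp : ∀ i ∈ s, 0 < p i) (x : ℝ) :
    HasStrictDerivAt (fun y : ℝ => ∑ i ∈ s, p i ^ y) (∑ i ∈ s, p i ^ x * Real.log (p i)) x :=
  HasStrictDerivAt.fun_sum fun i hi => Real.hasStrictDerivAt_const_rpow (hp i hi) x

theorem stmt1_general (k : ℝ) (hk : 0 < k) (C : ℝ × ℝ → ℝ)
    (hC : Filter.Tendsto (fun q : ℝ × ℝ => C q / (q.1 - q.2))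
      (nhdsWithin ((1 : ℝ), (1 : ℝ)) {q : ℝ × ℝ | q.1 ≠ q.2}) (nhds (-1 / k)))
    (n : ℕ) (p : Fin n → ℝ) (hp : ∀ i, 0 < p i) :
    Filter.Tendsto (fun q : ℝ × ℝ => ∑ i, (p i ^ q.1 - p i ^ q.2) / C q)
      (nhdsWithin ((1 : ℝ), (1 : ℝ)) {q : ℝ × ℝ | q.1 ≠ q.2})
      (nhds (-k * ∑ i, p i * Real.log (p i))) := by
  have hderiv := Real.hasStrictDerivAt_sum_const_rpow Finset.univ (fun i _ => hp i) 1
  have hlim := hderiv.tendsto_sub_div_of_tendsto_div_sub (by simp [hk.ne']) hC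
  rw [show -k * ∑ i, p i * Real.log (p i) = (∑ i, p i ^ (1 : ℝ) * Real.log (p i)) / (-1 / k) by
    simp only [Real.rpow_one]; field_simp]
  refine hlim.congr fun q => ?_
  rw [← Finset.sum_sub_distrib, Finset.sum_div]

theorem stmt1 (k : ℝ) (hk : 0 < k) (C : ℝ × ℝ → ℝ)
    (hC : Filter.Tendsto (fun q : ℝ × ℝ => C q / (q.1 - q.2))
      (nhdsWithin ((1 : ℝ), (1 : ℝ)) {q : ℝ × ℝ | q.1 ≠ q.2}) (nhds (-1 / k)))
    (n : ℕ) (p : Fin n → ℝ) (hp : ∀ i, 0 < p i) (hsum : ∑ i, p i = 1) :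
    Filter.Tendsto (fun q : ℝ × ℝ => ∑ i, (p i ^ q.1 - p i ^ q.2) / C q)
      (nhdsWithin ((1 : ℝ), (1 : ℝ)) {q : ℝ × ℝ | q.1 ≠ q.2})
      (nhds (-k * ∑ i, p i * Real.log (p i))) :=
  stmt1_general k hk C hC n p hp
end

section
/- Let k > 0 and let C be the counterexample-b function. Then there is no real number L such that C(α, β)/(α − β) tends to L as (α, β) tends to (1, 1) within the set {(α, β) | α ≠ β}. -/
/-! On the line `β - 1 = m (α - 1)` the quotient `C(α, β) / (α - β)` is the constant
`(m / (1 + m²) - 1) / (2k)`, so a limit `L` would equal this value for every slope `m ≠ 1`;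
the slopes `0` and `-1` give different values since `k ≠ 0`. -/

open Filter Topology

/-- The counterexample-b function from the paper. -/
noncomputable def Cb (k : ℝ) : ℝ × ℝ → ℝ := fun q =>
  if q = (1, 1) then 0
  else ((q.1 - q.2) / (2 * k)) *
    ((q.1 - 1) * (q.2 - 1) / ((q.1 - 1) ^ 2 + (q.2 - 1) ^ 2) - 1)

theorem Cb_div_sub_of_line (k : ℝ) {m x : ℝ} (hm : m ≠ 1) (hx : x ≠ 0) :
    Cb k (1 + x, 1 + m * x) / ((1 + x) - (1 + m * x)) = (m / (1 + m ^ 2) - 1) / (2 * k) := by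
  have hdiff : (1 + x) - (1 + m * x) ≠ 0 := by
    rw [show (1 + x) - (1 + m * x) = (1 - m) * x by ring]
    exact mul_ne_zero (sub_ne_zero.mpr hm.symm) hx
  have hne : ((1 + x, 1 + m * x) : ℝ × ℝ) ≠ (1, 1) := fun h =>
    hx (by simpa using congrArg Prod.fst h)
  have hslope : x * (m * x) / (x ^ 2 + (m * x) ^ 2) = m / (1 + m ^ 2) := by
    field_simp
  simp only [Cb, if_neg hne, add_sub_cancel_left, hslope]
  generalize (1 + x) - (1 + m * x) = d at hdiff ⊢
  field_simp

theorem tendsto_line_nhdsWithin_offDiag (m : ℝ) (hm : m ≠ 1) :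
    Tendsto (fun x : ℝ => ((1 + x, 1 + m * x) : ℝ × ℝ)) (𝓝[≠] 0)
      (𝓝[{q : ℝ × ℝ | q.1 ≠ q.2}] (1, 1)) := by
  rw [tendsto_nhdsWithin_iff]
  constructor
  · have hcont : Continuous fun x : ℝ => ((1 + x, 1 + m * x) : ℝ × ℝ) := by fun_prop
    exact (hcont.tendsto' 0 (1, 1) (by simp)).mono_left nhdsWithin_le_nhds
  · filter_upwards [self_mem_nhdsWithin] with x hx h
    exact mul_ne_zero (sub_ne_zero.mpr hm.symm) hx (by linarith)

theorem eq_of_tendsto_Cb_div_sub {k L : ℝ}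
    (hL : Tendsto (fun q : ℝ × ℝ => Cb k q / (q.1 - q.2))
      (𝓝[{q : ℝ × ℝ | q.1 ≠ q.2}] (1, 1)) (𝓝 L)) (m : ℝ) (hm : m ≠ 1) :
    L = (m / (1 + m ^ 2) - 1) / (2 * k) := by
  have hline := hL.comp (tendsto_line_nhdsWithin_offDiag m hm)
  refine tendsto_nhds_unique (hline.congr' ?_) tendsto_const_nhds
  filter_upwards [self_mem_nhdsWithin] with x hx
  exact Cb_div_sub_of_line k hm hx

theorem stmt10 (k : ℝ) (hk : 0 < k) :
    ¬ ∃ L : ℝ, Filter.Tendsto (fun q : ℝ × ℝ => Cb k q / (q.1 - q.2))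
      (nhdsWithin ((1 : ℝ), (1 : ℝ)) {q : ℝ × ℝ | q.1 ≠ q.2}) (nhds L) := by
  rintro ⟨L, hL⟩
  have hflat := eq_of_tendsto_Cb_div_sub hL 0 (by norm_num)
  have hdiag := eq_of_tendsto_Cb_div_sub hL (-1) (by norm_num)
  rw [hflat] at hdiag
  field_simp [hk.ne'] at hdiag
  norm_num at hdiag
end

section
/- Let α, β be real numbers, let c ≠ 0, and define s(x) = (x^α − x^β)/c for x ≥ 0. Let n ∈ ℕ, let m : Fin n → ℕ, and let p : (i : Fin n) → Fin (m i) → ℝ satisfy p i j ≥ 0 for all i, j. Set pᵢ = Σⱼ p i j and assume pᵢ > 0 for all i. Then Σᵢ Σⱼ s(p i j) = Σᵢ pᵢ^α · (Σⱼ s(p i j / pᵢ)) + Σᵢ s(pᵢ) · (Σⱼ (p i j / pᵢ)^β). (Two-parameter generalized Shannon additivity, axiom [TGSK3].) -/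
open Real

/-- Since `y ^ γ * (x / y) ^ γ = x ^ γ`, the cross terms `± y ^ α * (x / y) ^ β` cancel. -/
lemma rpow_sub_rpow_div_eq (α β c : ℝ) {x y : ℝ} (hx : 0 ≤ x) (hy : 0 < y) :
    (x ^ α - x ^ β) / c =
      y ^ α * (((x / y) ^ α - (x / y) ^ β) / c) + ((y ^ α - y ^ β) / c) * (x / y) ^ β := by
  have rpow_mul_div_rpow (γ : ℝ) : y ^ γ * (x / y) ^ γ = x ^ γ := by
    rw [div_rpow hx hy.le, mul_div_cancel₀ _ (rpow_pos_of_pos hy γ).ne']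
  rw [← rpow_mul_div_rpow α, ← rpow_mul_div_rpow β]
  ring

lemma sum_rpow_sub_rpow_div_eq {ι : Type*} [Fintype ι] (α β c : ℝ) {q : ι → ℝ}
    (hq : ∀ j, 0 ≤ q j) {y : ℝ} (hy : 0 < y) :
    ∑ j, (q j ^ α - q j ^ β) / c =
      y ^ α * ∑ j, ((q j / y) ^ α - (q j / y) ^ β) / c +
        ((y ^ α - y ^ β) / c) * ∑ j, (q j / y) ^ β := by
  rw [Finset.mul_sum, Finset.mul_sum, ← Finset.sum_add_distrib]
  exact Finset.sum_congr rfl fun j _ => rpow_sub_rpow_div_eq α β c (hq j) hy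

theorem stmt12_general (α β c : ℝ) (n : ℕ) (m : Fin n → ℕ)
    (p : (i : Fin n) → Fin (m i) → ℝ) (hp : ∀ i j, 0 < p i j)
    (hpos : ∀ i, 0 < ∑ j, p i j) :
    ∑ i, ∑ j, ((p i j) ^ α - (p i j) ^ β) / c =
      (∑ i, (∑ j, p i j) ^ α *
        ∑ j, ((p i j / ∑ j', p i j') ^ α - (p i j / ∑ j', p i j') ^ β) / c) +
      ∑ i, (((∑ j, p i j) ^ α - (∑ j, p i j) ^ β) / c) *
        ∑ j, (p i j / ∑ j', p i j') ^ β := by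
  rw [← Finset.sum_add_distrib]
  exact Finset.sum_congr rfl fun i _ =>
    sum_rpow_sub_rpow_div_eq α β c (fun j => (hp i j).le) (hpos i)

theorem stmt12 (α β c : ℝ) (hc : c ≠ 0) (n : ℕ) (m : Fin n → ℕ)
    (p : (i : Fin n) → Fin (m i) → ℝ) (hp : ∀ i j, 0 < p i j)
    (hpos : ∀ i, 0 < ∑ j, p i j) :
    ∑ i, ∑ j, ((p i j) ^ α - (p i j) ^ β) / c =
      (∑ i, (∑ j, p i j) ^ α *
        ∑ j, ((p i j / ∑ j', p i j') ^ α - (p i j / ∑ j', p i j') ^ β) / c) +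
      ∑ i, (((∑ j, p i j) ^ α - (∑ j, p i j) ^ β) / c) *
        ∑ j, (p i j / ∑ j', p i j') ^ β :=
  stmt12_general α β c n m p hp hpos
end

section
/- Let α ≥ 1 and 0 ≤ β ≤ 1 with (α, β) ≠ (1, 1), let c < 0, and let (p₁, …, pₙ) be a probability vector. Then Σᵢ (pᵢ^α − pᵢ^β)/c ≤ n · ((1/n)^α − (1/n)^β)/c; that is, the entropy S(p₁, …, pₙ) = Σᵢ (pᵢ^α − pᵢ^β)/c is maximized by the uniform distribution (axiom [TGSK2]). -/
/-! Since `x ^ α` is convex and `x ^ β` concave on `[0, ∞)`, dividing their difference by `c < 0`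
gives a concave function, and Jensen's inequality with uniform weights compares the sum with
`n` times its value at the mean `1 / n`. -/

open Real Finset

lemma ConcaveOn.sum_le_card_mul_map_average {E : Type*} [AddCommGroup E] [Module ℝ E]
    {s : Set E} {f : E → ℝ} (hf : ConcaveOn ℝ s f) {ι : Type*} {t : Finset ι} (ht : t.Nonempty)
    {p : ι → E} (hp : ∀ i ∈ t, p i ∈ s) :
    ∑ i ∈ t, f (p i) ≤ #t * f ((#t : ℝ)⁻¹ • ∑ i ∈ t, p i) := by
  have hcard : (0 : ℝ) < #t := by exact_mod_cast ht.card_pos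
  have jensen := hf.le_map_sum (w := fun _ ↦ (#t : ℝ)⁻¹) (fun _ _ ↦ by positivity)
    (by rw [sum_const, nsmul_eq_mul, mul_inv_cancel₀ hcard.ne']) hp
  rw [← smul_sum, ← smul_sum, smul_eq_mul] at jensen
  rwa [inv_mul_le_iff₀ hcard] at jensen

lemma concaveOn_rpow_sub_rpow_div {α β c : ℝ} (hα : 1 ≤ α) (hβ0 : 0 ≤ β) (hβ1 : β ≤ 1)
    (hc : c ≤ 0) : ConcaveOn ℝ (Set.Ici 0) fun x : ℝ ↦ (x ^ α - x ^ β) / c := by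
  have hconvex : ConvexOn ℝ (Set.Ici 0) fun x : ℝ ↦ x ^ α - x ^ β :=
    (convexOn_rpow hα).sub (concaveOn_rpow hβ0 hβ1)
  refine (hconvex.neg.smul (c := -c⁻¹) (neg_nonneg.2 (inv_nonpos.2 hc))).congr fun x _ ↦ ?_
  simp only [Pi.neg_apply, smul_eq_mul]
  ring

theorem stmt13_general (α β c : ℝ) (hα : 1 ≤ α) (hβ0 : 0 ≤ β) (hβ1 : β ≤ 1)
    (hc : c < 0)
    (n : ℕ) (p : Fin n → ℝ) (hp : ∀ i, 0 ≤ p i) (hsum : ∑ i, p i = 1) :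
    ∑ i, (p i ^ α - p i ^ β) / c ≤
      (n : ℝ) * ((((1 : ℝ) / n) ^ α - ((1 : ℝ) / n) ^ β) / c) := by
  have hn : (univ : Finset (Fin n)).Nonempty := by
    rw [univ_nonempty_iff, ← Fin.pos_iff_nonempty, Nat.pos_iff_ne_zero]
    rintro rfl
    simp at hsum
  simpa [hsum] using (concaveOn_rpow_sub_rpow_div hα hβ0 hβ1 hc.le).sum_le_card_mul_map_average
    hn fun i _ ↦ hp i

theorem stmt13 (α β c : ℝ) (hα : 1 ≤ α) (hβ0 : 0 ≤ β) (hβ1 : β ≤ 1)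
    (hne : (α, β) ≠ ((1 : ℝ), (1 : ℝ))) (hc : c < 0)
    (n : ℕ) (p : Fin n → ℝ) (hp : ∀ i, 0 ≤ p i) (hsum : ∑ i, p i = 1) :
    ∑ i, (p i ^ α - p i ^ β) / c ≤
      (n : ℝ) * ((((1 : ℝ) / n) ^ α - ((1 : ℝ) / n) ^ β) / c) :=
  stmt13_general α β c hα hβ0 hβ1 hc n p hp hsum
end

section
/- Let A : ℝ × ℝ → ℝ be such that A(κ₁, κ₂)·(κ₁ − κ₂) tends to 1 as (κ₁, κ₂) tends to (0, 0) within the set {(κ₁, κ₂) | κ₁ ≠ κ₂}. Then for every x > 0, the function (κ₁, κ₂) ↦ A(κ₁, κ₂)·(x^{κ₁} − x^{κ₂}) tends to ln x as (κ₁, κ₂) tends to (0, 0) within the set {(κ₁, κ₂) | κ₁ ≠ κ₂}. -/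
open Filter Real Topology

theorem HasStrictDerivAt.tendsto_slope {𝕜 E : Type*} [NontriviallyNormedField 𝕜]
    [NormedAddCommGroup E] [NormedSpace 𝕜 E] {f : 𝕜 → E} {f' : E} {a : 𝕜}
    (hf : HasStrictDerivAt f f' a) :
    Tendsto (fun p : 𝕜 × 𝕜 => slope f p.2 p.1) (𝓝[{p | p.1 ≠ p.2}] (a, a)) (𝓝 f') := by
  have hrem := (hasDerivAtFilter_iff_isLittleO.mp hf).tendsto_inv_smul_nhds_zero
  refine tendsto_sub_nhds_zero_iff.mp <| (hrem.mono_left nhdsWithin_le_nhds).congr' ?_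
  filter_upwards [self_mem_nhdsWithin] with p hp
  rw [slope_def_module, smul_sub, smul_smul, inv_mul_cancel₀ (sub_ne_zero.mpr hp), one_smul]

theorem stmt15 (A : ℝ × ℝ → ℝ)
    (hA : Filter.Tendsto (fun q : ℝ × ℝ => A q * (q.1 - q.2))
      (nhdsWithin ((0 : ℝ), (0 : ℝ)) {q : ℝ × ℝ | q.1 ≠ q.2}) (nhds 1))
    (x : ℝ) (hx : 0 < x) :
    Filter.Tendsto (fun q : ℝ × ℝ => A q * (x ^ q.1 - x ^ q.2))
      (nhdsWithin ((0 : ℝ), (0 : ℝ)) {q : ℝ × ℝ | q.1 ≠ q.2})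
      (nhds (Real.log x)) := by
  have hderiv : HasStrictDerivAt (fun t : ℝ => x ^ t) (Real.log x) 0 := by
    simpa using Real.hasStrictDerivAt_const_rpow hx 0
  have hprod := hA.mul hderiv.tendsto_slope
  rw [one_mul] at hprod
  refine hprod.congr' ?_
  filter_upwards [self_mem_nhdsWithin] with q hq
  rw [slope_def_field, mul_assoc, mul_div_cancel₀ _ (sub_ne_zero.mpr hq)]
end

section
/- Let A : ℝ × ℝ → ℝ and let x > 0 with x ≠ 1. If the function (κ₁, κ₂) ↦ A(κ₁, κ₂)·(x^{κ₁} − x^{κ₂}) tends to ln x as (κ₁, κ₂) tends to (0, 0) within the set {(κ₁, κ₂) | κ₁ ≠ κ₂}, then A(κ₁, κ₂)·(κ₁ − κ₂) tends to 1 as (κ₁, κ₂) tends to (0, 0) within the same set. -/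
/-!
Strict differentiability of `κ ↦ x ^ κ` at `0` makes the two-point difference quotient
`(x ^ κ₁ - x ^ κ₂) / (κ₁ - κ₂)` tend to `log x ≠ 0`;
dividing the hypothesis by it gives the claim.
-/

open Filter Real Topology

theorem HasStrictDerivAt.tendsto_inv_sub_smul_sub {𝕜 F : Type*} [NontriviallyNormedField 𝕜]
    [NormedAddCommGroup F] [NormedSpace 𝕜 F] {f : 𝕜 → F} {f' : F} {a : 𝕜}
    (hf : HasStrictDerivAt f f' a) :
    Tendsto (fun p : 𝕜 × 𝕜 => (p.1 - p.2)⁻¹ • (f p.1 - f p.2))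
      (𝓝[{p | p.1 ≠ p.2}] (a, a)) (𝓝 f') := by
  have hremainder := ((hasDerivAtFilter_iff_isLittleO.mp hf).mono
    (nhdsWithin_le_nhds (s := {p : 𝕜 × 𝕜 | p.1 ≠ p.2}))).tendsto_inv_smul_nhds_zero
  refine (zero_add f' ▸ hremainder.add_const f').congr' ?_
  filter_upwards [self_mem_nhdsWithin] with p hp
  rw [smul_sub, inv_smul_smul₀ (sub_ne_zero.mpr hp), sub_add_cancel]

theorem Filter.Tendsto.mul_of_tendsto_inv_mul {α K : Type*} [Field K] [TopologicalSpace K]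
    [T1Space K] [ContinuousMul K] [ContinuousInv₀ K] {l : Filter α} {f g h : α → K} {a b : K}
    (hfg : Tendsto (fun t => f t * g t) l (𝓝 a))
    (hgh : Tendsto (fun t => (h t)⁻¹ * g t) l (𝓝 b))
    (hb : b ≠ 0) (hh : ∀ᶠ t in l, h t ≠ 0) :
    Tendsto (fun t => f t * h t) l (𝓝 (a / b)) := by
  refine (hfg.div hgh hb).congr' ?_
  filter_upwards [hh, hgh.eventually_ne hb] with t ht hght
  have hg : g t ≠ 0 := right_ne_zero_of_mul hght
  simp only [Pi.div_apply]
  field_simp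

theorem stmt16 (A : ℝ × ℝ → ℝ) (x : ℝ) (hx : 0 < x) (hx1 : x ≠ 1)
    (hA : Filter.Tendsto (fun q : ℝ × ℝ => A q * (x ^ q.1 - x ^ q.2))
      (nhdsWithin ((0 : ℝ), (0 : ℝ)) {q : ℝ × ℝ | q.1 ≠ q.2})
      (nhds (Real.log x))) :
    Filter.Tendsto (fun q : ℝ × ℝ => A q * (q.1 - q.2))
      (nhdsWithin ((0 : ℝ), (0 : ℝ)) {q : ℝ × ℝ | q.1 ≠ q.2}) (nhds 1) := by
  have hlog : Real.log x ≠ 0 := Real.log_ne_zero_of_pos_of_ne_one hx hx1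
  have hslope : Tendsto (fun q : ℝ × ℝ => (q.1 - q.2)⁻¹ * (x ^ q.1 - x ^ q.2))
      (𝓝[{q | q.1 ≠ q.2}] (0, 0)) (𝓝 (Real.log x)) := by
    simpa using (hasStrictDerivAt_const_rpow hx 0).tendsto_inv_sub_smul_sub
  have hsub : ∀ᶠ q : ℝ × ℝ in 𝓝[{q | q.1 ≠ q.2}] (0, 0), q.1 - q.2 ≠ 0 := by
    filter_upwards [self_mem_nhdsWithin] with q hq using sub_ne_zero.mpr hq
  simpa [div_self hlog] using hA.mul_of_tendsto_inv_mul hslope hlog hsub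
end
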